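/- arXiv:2108.03336 — 5 statements merged into one kernel-verified Lean document; each statement's English description precedes it below -/
import Mathlib

section
/- Given a symmetric matrix P ∈ ℝ^{n×n} and orthonormal vectors x̂_1, …, x̂_q ∈ ℝ^n, the diagonal matrix Γ minimizing the Frobenius norm ‖P - X̂ Γ X̂^T‖_F, where X̂ has columns x̂_1, …, x̂_q, is given by Γ_jj = x̂_j^T P x̂_j for each j. -/
open Matrix Finset

/-- The Frobenius norm of a real matrix, written explicitly. -/
noncomputable def frobNorm {m k : ℕ} (M : Matrix (Fin m) (Fin k) ℝ) : ℝ :=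
  Real.sqrt (∑ i, ∑ j, (M i j) ^ 2)

lemma sumSq_eq_trace {m k : ℕ} (M : Matrix (Fin m) (Fin k) ℝ) :
    ∑ i, ∑ j, (M i j) ^ 2 = Matrix.trace (Mᵀ * M) := by
  simp [Matrix.trace, Matrix.mul_apply, Matrix.diag, sq]
  rw [Finset.sum_comm]

lemma trace_mul_diagonal {q : ℕ} (M : Matrix (Fin q) (Fin q) ℝ) (γ : Fin q → ℝ) :
    Matrix.trace (M * Matrix.diagonal γ) = ∑ j, M j j * γ j := by
  simp [Matrix.trace, Matrix.mul_apply, Matrix.diag, Matrix.diagonal]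

lemma sumSq_expand {n q : ℕ} (P : Matrix (Fin n) (Fin n) ℝ) (hP : P.IsSymm)
    (X : Matrix (Fin n) (Fin q) ℝ) (hX : Xᵀ * X = 1) (γ : Fin q → ℝ) :
    ∑ i, ∑ j, ((P - X * Matrix.diagonal γ * Xᵀ) i j)^2
      = Matrix.trace (Pᵀ * P) - 2 * ∑ j, γ j * (Xᵀ * P * X) j j + ∑ j, (γ j)^2 := by
  rw [sumSq_eq_trace]
  have hPT : Pᵀ = P := hP
  have hAT : (X * Matrix.diagonal γ * Xᵀ)ᵀ = X * Matrix.diagonal γ * Xᵀ := by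
    simp [Matrix.transpose_mul, Matrix.diagonal_transpose, Matrix.mul_assoc]
  rw [Matrix.transpose_sub, hPT, hAT, Matrix.sub_mul, Matrix.mul_sub, Matrix.mul_sub,
    Matrix.trace_sub, Matrix.trace_sub]
  have h1 : Matrix.trace (P * (X * Matrix.diagonal γ * Xᵀ))
      = ∑ j, γ j * (Xᵀ * P * X) j j := by
    rw [← Matrix.mul_assoc, ← Matrix.mul_assoc, Matrix.trace_mul_cycle,
      ← Matrix.mul_assoc, trace_mul_diagonal]
    exact Finset.sum_congr rfl (fun j _ => mul_comm _ _)
  have h2 : Matrix.trace (X * Matrix.diagonal γ * Xᵀ * P)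
      = ∑ j, γ j * (Xᵀ * P * X) j j := by
    rw [← h1, Matrix.trace_mul_comm]
  have h3 : Matrix.trace (X * Matrix.diagonal γ * Xᵀ * (X * Matrix.diagonal γ * Xᵀ))
      = ∑ j, (γ j)^2 := by
    simp only [Matrix.mul_assoc]
    rw [← Matrix.mul_assoc Xᵀ X, hX, Matrix.one_mul, Matrix.trace_mul_comm]
    simp only [Matrix.mul_assoc]
    rw [hX, Matrix.mul_one]
    simp [Matrix.trace, Matrix.mul_apply, Matrix.diagonal, Matrix.diag, sq]
  simp only [Matrix.trace_sub]
  rw [h1, h2, h3]; ring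

/-- Among diagonal matrices `Γ`, the Frobenius norm `‖P - X̂ Γ X̂ᵀ‖_F` is minimized by
taking `Γ_jj = x̂_jᵀ P x̂_j`, where the columns of `X̂` are orthonormal. -/
theorem optimal_diagonal_reconstruction
    {n q : ℕ} (P : Matrix (Fin n) (Fin n) ℝ) (hP : P.IsSymm)
    (X : Matrix (Fin n) (Fin q) ℝ) (hX : Xᵀ * X = 1) :
    ∀ γ : Fin q → ℝ,
      frobNorm (P - X * Matrix.diagonal (fun j => (Xᵀ * P * X) j j) * Xᵀ) ≤
        frobNorm (P - X * Matrix.diagonal γ * Xᵀ) := by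
  intro γ
  set m : Fin q → ℝ := fun j => (Xᵀ * P * X) j j with hm
  apply Real.sqrt_le_sqrt
  rw [sumSq_expand P hP X hX γ, sumSq_expand P hP X hX m]
  have key : (0:ℝ) ≤ ∑ j, (γ j - m j)^2 :=
    Finset.sum_nonneg (fun j _ => sq_nonneg _)
  have expand : ∑ j, (γ j - m j)^2
      = (∑ j, (γ j)^2) - 2 * (∑ j, γ j * m j) + ∑ j, (m j)^2 := by
    rw [Finset.mul_sum, ← Finset.sum_sub_distrib, ← Finset.sum_add_distrib]
    exact Finset.sum_congr rfl (fun j _ => by ring)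
  have : ∑ j, m j * m j = ∑ j, (m j)^2 := Finset.sum_congr rfl (fun j _ => (sq (m j)).symm)
  rw [this]
  nlinarith [key, expand]
end

section
/- For a Poisson random variable Z with mean μ ≤ 1, there exists a universal constant C > 0 such that for all integers p ≥ 2, E|Z - μ|^p ≤ C μ (p!/2) (e/2)^{p-2}. -/
open ProbabilityTheory Real

/-- Poisson moment growth: for `Z ~ Poisson(μ)` with `μ ≤ 1`, there is a universal
constant `C > 0` such that for all integers `p ≥ 2`,
`E|Z - μ|^p ≤ C μ (p!/2) (e/2)^(p-2)`. -/
theorem poisson_moment_growth :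
    ∃ C : ℝ, 0 < C ∧ ∀ (μ : NNReal), μ ≤ 1 → ∀ p : ℕ, 2 ≤ p →
      (∑' z : ℕ, poissonPMFReal μ z * |(z : ℝ) - (μ : ℝ)| ^ p) ≤
        C * (μ : ℝ) * ((Nat.factorial p : ℝ) / 2) * (Real.exp 1 / 2) ^ (p - 2) := by
  refine ⟨2 * Real.exp (Real.exp 1), by positivity, fun μ hμ p hp => ?_⟩
  have hμ0 : (0:ℝ) ≤ μ := μ.coe_nonneg
  have hμ1 : (μ:ℝ) ≤ 1 := hμ
  have hfac1 : (1:ℝ) ≤ (p.factorial : ℝ) := by exact_mod_cast p.factorial_pos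
  -- termwise bound
  have hterm : ∀ z : ℕ, poissonPMFReal μ z * |(z:ℝ) - μ| ^ p ≤
      (μ:ℝ) * ((p.factorial : ℝ) * Real.exp 1 ^ z / (z.factorial : ℝ)) := by
    intro z
    have hzf : (0:ℝ) < (z.factorial : ℝ) := by exact_mod_cast z.factorial_pos
    rw [poissonPMFReal]
    rcases Nat.eq_zero_or_pos z with hz | hz
    · subst hz
      simp only [Nat.cast_zero, pow_zero, Nat.factorial_zero, Nat.cast_one, mul_one, div_one,
        zero_sub, abs_neg, abs_of_nonneg hμ0]
      have h1 : Real.exp (-(μ:ℝ)) * (μ:ℝ) ^ p ≤ (μ:ℝ) ^ p := by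
        nlinarith [Real.exp_le_one_iff.2 (neg_nonpos.2 hμ0), pow_nonneg hμ0 p]
      have h2 : (μ:ℝ) ^ p ≤ (μ:ℝ) := by
        calc (μ:ℝ) ^ p ≤ (μ:ℝ) ^ 1 := pow_le_pow_of_le_one hμ0 hμ1 (by omega)
        _ = μ := pow_one _
      nlinarith
    · -- z ≥ 1
      have hz1 : (1:ℝ) ≤ (z:ℝ) := by exact_mod_cast hz
      have habs : |(z:ℝ) - μ| ≤ (z:ℝ) := by
        rw [abs_of_nonneg (by linarith)]; linarith
      have hpowabs : |(z:ℝ) - μ| ^ p ≤ (z:ℝ) ^ p :=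
        pow_le_pow_left₀ (abs_nonneg _) habs p
      have hμz : (μ:ℝ) ^ z ≤ (μ:ℝ) := by
        calc (μ:ℝ) ^ z ≤ (μ:ℝ) ^ 1 := pow_le_pow_of_le_one hμ0 hμ1 hz
        _ = μ := pow_one _
      have hzp : (z:ℝ) ^ p ≤ (p.factorial : ℝ) * Real.exp 1 ^ z := by
        have := Real.pow_div_factorial_le_exp (x := (z:ℝ)) (by linarith) p
        have hexp : Real.exp (z:ℝ) = Real.exp 1 ^ z := by
          rw [← Real.exp_nat_mul]; norm_num
        rw [hexp] at this
        have hpf : (0:ℝ) < (p.factorial : ℝ) := by exact_mod_cast p.factorial_pos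
        calc (z:ℝ) ^ p = (z:ℝ) ^ p / (p.factorial:ℝ) * (p.factorial:ℝ) := by
              field_simp
        _ ≤ Real.exp 1 ^ z * (p.factorial:ℝ) := by
              exact mul_le_mul_of_nonneg_right this hpf.le
        _ = (p.factorial : ℝ) * Real.exp 1 ^ z := by ring
      have hexpneg : Real.exp (-(μ:ℝ)) ≤ 1 := Real.exp_le_one_iff.2 (neg_nonpos.2 hμ0)
      have habs0 : (0:ℝ) ≤ |(z:ℝ) - μ| ^ p := pow_nonneg (abs_nonneg _) p
      calc Real.exp (-(μ:ℝ)) * (μ:ℝ) ^ z / (z.factorial:ℝ) * |(z:ℝ) - μ| ^ p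
          ≤ 1 * (μ:ℝ) / (z.factorial:ℝ) * ((z:ℝ) ^ p) := by
            gcongr <;> first
              | exact hexpneg | exact hμz | exact hpowabs
      _ = (μ:ℝ) * ((z:ℝ) ^ p / (z.factorial:ℝ)) := by ring
      _ ≤ (μ:ℝ) * ((p.factorial : ℝ) * Real.exp 1 ^ z / (z.factorial : ℝ)) := by
            gcongr
  -- summability of the majorant
  have hsum : Summable (fun z : ℕ => (μ:ℝ) * ((p.factorial : ℝ) * Real.exp 1 ^ z / (z.factorial : ℝ))) := by
    apply Summable.mul_left
    simp_rw [mul_div_assoc]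
    exact (Real.summable_pow_div_factorial (Real.exp 1)).mul_left _
  have hnn : ∀ z : ℕ, 0 ≤ poissonPMFReal μ z * |(z:ℝ) - μ| ^ p := fun z =>
    mul_nonneg poissonPMFReal_nonneg (pow_nonneg (abs_nonneg _) p)
  have hsumL : Summable (fun z : ℕ => poissonPMFReal μ z * |(z:ℝ) - μ| ^ p) :=
    Summable.of_nonneg_of_le hnn hterm hsum
  have h1 := Summable.tsum_le_tsum hterm hsumL hsum
  have h2 : (∑' z : ℕ, (μ:ℝ) * ((p.factorial : ℝ) * Real.exp 1 ^ z / (z.factorial : ℝ)))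
      = (μ:ℝ) * (p.factorial : ℝ) * Real.exp (Real.exp 1) := by
    rw [tsum_mul_left]
    simp_rw [mul_div_assoc]
    rw [tsum_mul_left]
    have : (∑' z : ℕ, Real.exp 1 ^ z / (z.factorial : ℝ)) = Real.exp (Real.exp 1) := by
      rw [Real.exp_eq_exp_ℝ, NormedSpace.exp_eq_tsum_div]
    rw [this]; ring
  rw [h2] at h1
  refine h1.trans ?_
  have he : (1:ℝ) ≤ Real.exp 1 / 2 := by
    have := Real.exp_one_gt_d9; linarith
  have hone : (1:ℝ) ≤ (Real.exp 1 / 2) ^ (p - 2) := one_le_pow₀ he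
  have hkey := mul_le_mul_of_nonneg_left hone
    (by positivity : (0:ℝ) ≤ Real.exp (Real.exp 1) * (μ:ℝ) * (p.factorial:ℝ))
  nlinarith [hkey]
end

section
/- For a Poisson random variable Z with mean μ ≤ 1, there exists a constant C' > 0 such that for all integers p ≥ 2, E|Z - μ|^p ≤ C' μ (p/2)^p. -/
/-!
Bound the series termwise. For `z ≥ 1`, `e^{-μ} μ^z ≤ μ` and `|z - μ|^p ≤ z^p ≤ p! e^z`; for
`z = 0` the term is at most `μ^p ≤ μ`. Hence the moment is at most
`μ p! ∑ e^z / z! = μ p! e^e`, and `p! ≤ 4 (p/2)^p` by induction, the step being Bernoulli's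
`(1 + 1/n)^n ≥ 2`.
-/

open ProbabilityTheory Real Nat

set_option linter.deprecated false

lemma two_mul_pow_le_succ_pow {n : ℕ} (hn : 1 ≤ n) : 2 * (n : ℝ) ^ n ≤ (n + 1) ^ n := by
  have hn0 : (0 : ℝ) < n := by exact_mod_cast hn
  have bernoulli : 1 + n * (1 / n : ℝ) ≤ (1 + 1 / n) ^ n :=
    one_add_mul_le_pow (by linarith [one_div_pos.mpr hn0]) n
  calc 2 * (n : ℝ) ^ n = (1 + n * (1 / n : ℝ)) * n ^ n := by field_simp; ring
    _ ≤ (1 + 1 / n) ^ n * n ^ n := by gcongr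
    _ = (n + 1) ^ n := by rw [← mul_pow]; field_simp

lemma factorial_le_four_mul_half_pow {p : ℕ} (hp : 1 ≤ p) :
    (p ! : ℝ) ≤ 4 * ((p : ℝ) / 2) ^ p := by
  induction p, hp using Nat.le_induction with
  | base => norm_num
  | succ n hn ih =>
    calc ((n + 1)! : ℝ) = (n + 1) * n ! := by push_cast [Nat.factorial_succ]; ring
      _ ≤ (n + 1) * (4 * ((n : ℝ) / 2) ^ n) := by gcongr
      _ = 4 * ((n + 1) / 2) * (2 * (n : ℝ) ^ n) / 2 ^ n := by rw [div_pow]; ring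
      _ ≤ 4 * ((n + 1) / 2) * ((n + 1) ^ n) / 2 ^ n := by
        gcongr; exact two_mul_pow_le_succ_pow hn
      _ = 4 * (((n + 1 : ℕ) : ℝ) / 2) ^ (n + 1) := by push_cast; rw [div_pow, pow_succ]; ring

lemma pow_le_factorial_mul_exp {x : ℝ} (hx : 0 ≤ x) (p : ℕ) : x ^ p ≤ (p ! : ℝ) * exp x := by
  have h := Real.pow_div_factorial_le_exp x hx p
  rwa [div_le_iff₀ (by positivity), mul_comm] at h

lemma pow_mul_abs_sub_pow_le {μ : ℝ} (hμ0 : 0 ≤ μ) (hμ1 : μ ≤ 1) {p : ℕ} (hp : 1 ≤ p) (z : ℕ) :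
    μ ^ z * |(z : ℝ) - μ| ^ p ≤ μ * (p ! * exp z) := by
  rcases Nat.eq_zero_or_pos z with rfl | hz
  · have hpow : μ ^ p ≤ μ := pow_le_of_le_one hμ0 hμ1 (by omega)
    have hfac : (1 : ℝ) ≤ p ! := by exact_mod_cast p.factorial_pos
    simp only [pow_zero, CharP.cast_eq_zero, zero_sub, abs_neg, abs_of_nonneg hμ0, one_mul,
      exp_zero, mul_one]
    nlinarith
  · have hz1 : (1 : ℝ) ≤ z := by exact_mod_cast hz
    have hpow : μ ^ z ≤ μ := pow_le_of_le_one hμ0 hμ1 hz.ne'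
    have habs : |(z : ℝ) - μ| ≤ z := by rw [abs_of_nonneg (by linarith)]; linarith
    calc μ ^ z * |(z : ℝ) - μ| ^ p ≤ μ * (z : ℝ) ^ p := by gcongr
      _ ≤ μ * (p ! * exp z) := by gcongr; exact pow_le_factorial_mul_exp (by positivity) p

lemma poissonPMFReal_mul_abs_sub_pow_le {μ : NNReal} (hμ : μ ≤ 1) {p : ℕ} (hp : 1 ≤ p) (z : ℕ) :
    poissonPMFReal μ z * |(z : ℝ) - μ| ^ p ≤ μ * p ! * (exp 1 ^ z / z !) := by
  have hexp : exp (-(μ : ℝ)) ≤ 1 := exp_le_one_iff.mpr (by simp)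
  have hmoment := pow_mul_abs_sub_pow_le μ.coe_nonneg (by exact_mod_cast hμ) hp z
  calc poissonPMFReal μ z * |(z : ℝ) - μ| ^ p
        = exp (-(μ : ℝ)) * (μ ^ z * |(z : ℝ) - μ| ^ p) / z ! := by
          rw [poissonPMFReal]; ring
    _ ≤ 1 * (μ * (p ! * exp z)) / z ! := by gcongr
    _ = μ * p ! * (exp 1 ^ z / z !) := by rw [exp_one_pow]; ring

/-- For `Z ~ Poisson(μ)` with `μ ≤ 1`, there is a universal constant `C' > 0` such that
for all integers `p ≥ 2`, `E|Z - μ|^p ≤ C' μ (p/2)^p`. -/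
theorem poisson_moment_growth' :
    ∃ C' : ℝ, 0 < C' ∧ ∀ (μ : NNReal), μ ≤ 1 → ∀ p : ℕ, 2 ≤ p →
      (∑' z : ℕ, poissonPMFReal μ z * |(z : ℝ) - (μ : ℝ)| ^ p) ≤
        C' * (μ : ℝ) * ((p : ℝ) / 2) ^ p := by
  refine ⟨4 * exp (exp 1), by positivity, fun μ hμ p hp => ?_⟩
  have hterm := poissonPMFReal_mul_abs_sub_pow_le hμ (show 1 ≤ p by omega)
  have hbound : HasSum (fun z : ℕ => μ * p ! * (exp 1 ^ z / z !)) (μ * p ! * exp (exp 1)) := by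
    simpa only [← exp_eq_exp_ℝ] using
      (NormedSpace.expSeries_div_hasSum_exp (exp 1)).mul_left ((μ : ℝ) * p !)
  have hsummable : Summable fun z : ℕ => poissonPMFReal μ z * |(z : ℝ) - μ| ^ p :=
    .of_nonneg_of_le (fun _ => mul_nonneg poissonPMFReal_nonneg (by positivity)) hterm
      hbound.summable
  calc (∑' z : ℕ, poissonPMFReal μ z * |(z : ℝ) - μ| ^ p)
      ≤ μ * p ! * exp (exp 1) := hasSum_le hterm hsummable.hasSum hbound
    _ ≤ μ * (4 * ((p : ℝ) / 2) ^ p) * exp (exp 1) := by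
      gcongr; exact factorial_le_four_mul_half_pow (by omega)
    _ = 4 * exp (exp 1) * μ * ((p : ℝ) / 2) ^ p := by ring
end

section
/- Let Q ∈ ℝ^{n×n} be a symmetric positive semidefinite matrix with non-negative entries, and let d = Q·1_n be the vector of expected degrees (assumed strictly positive). Then for any vector x ∈ ℝ^n, 2(x²)^T Q x² - (x²)^T diag(Q) x² ≥ ⟨d, x²⟩² / (Σ_i d_i), where x² denotes the entrywise square of x. -/
open Matrix Finset

/-!
With `y = x²` and `1` the all-ones vector, `⟨d, y⟩ = yᵀ Q 1` and `∑ i, d i = 1ᵀ Q 1`, so the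
Cauchy–Schwarz inequality for the semi-inner product `(u, v) ↦ uᵀ Q v` bounds the left-hand side
by `yᵀ Q y`. Since `Q` and `y` are entrywise nonnegative, the diagonal part `yᵀ diag(Q) y` is at
most `yᵀ Q y`, so `yᵀ Q y ≤ 2 yᵀ Q y - yᵀ diag(Q) y`.
-/

theorem Matrix.PosSemidef.dotProduct_mulVec_sq_le {ι : Type*} [Fintype ι] {Q : Matrix ι ι ℝ}
    (hQ : Q.PosSemidef) (u v : ι → ℝ) :
    (u ⬝ᵥ Q *ᵥ v) ^ 2 ≤ (u ⬝ᵥ Q *ᵥ u) * (v ⬝ᵥ Q *ᵥ v) := by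
  let := Q.toSeminormedAddCommGroup hQ
  let := Q.toInnerProductSpace hQ
  have h : (Q *ᵥ v ⬝ᵥ star u) * (Q *ᵥ v ⬝ᵥ star u) ≤ (Q *ᵥ u ⬝ᵥ star u) * (Q *ᵥ v ⬝ᵥ star v) :=
    real_inner_mul_inner_self_le u v
  simpa only [star_trivial, dotProduct_comm (Q *ᵥ _), sq] using h

theorem Matrix.PosSemidef.dotProduct_mulVec_nonneg_real {ι : Type*} [Fintype ι]
    {Q : Matrix ι ι ℝ} (hQ : Q.PosSemidef) (v : ι → ℝ) : 0 ≤ v ⬝ᵥ Q *ᵥ v := by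
  simpa only [star_trivial] using hQ.dotProduct_mulVec_nonneg v

theorem Matrix.dotProduct_diagonal_mulVec_le {ι : Type*} [Fintype ι] [DecidableEq ι]
    {Q : Matrix ι ι ℝ} (hQ : ∀ i j, 0 ≤ Q i j) {y : ι → ℝ} (hy : 0 ≤ y) :
    y ⬝ᵥ diagonal (fun i => Q i i) *ᵥ y ≤ y ⬝ᵥ Q *ᵥ y := by
  simp only [dotProduct, mulVec_diagonal]
  simp only [mulVec, dotProduct, mul_sum]
  exact sum_le_sum fun i _ => single_le_sum (f := fun j => y i * (Q i j * y j))
    (fun j _ => mul_nonneg (hy i) (mul_nonneg (hQ i j) (hy j))) (mem_univ i)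

theorem variance_lower_bound_general
    {n : ℕ} (Q : Matrix (Fin n) (Fin n) ℝ)
    (hpsd : Q.PosSemidef) (hnonneg : ∀ i j, 0 ≤ Q i j)
    (d : Fin n → ℝ) (hd : ∀ i, d i = ∑ j, Q i j)
    (x : Fin n → ℝ) :
    ((fun i => (x i) ^ 2) ⬝ᵥ (d : Fin n → ℝ)) ^ 2 / (∑ i, d i) ≤
      2 * ((fun i => (x i) ^ 2) ⬝ᵥ Q *ᵥ (fun i => (x i) ^ 2)) -
        ((fun i => (x i) ^ 2) ⬝ᵥ (Matrix.diagonal fun i => Q i i) *ᵥ (fun i => (x i) ^ 2)) := by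
  set y : Fin n → ℝ := fun i => x i ^ 2
  have hy : 0 ≤ y := fun i => sq_nonneg (x i)
  have hd_eq : d = Q *ᵥ 1 := funext fun i => by simp [hd, mulVec, dotProduct]
  rw [hd_eq, ← one_dotProduct]
  have hdiag := dotProduct_diagonal_mulVec_le hnonneg hy
  calc (y ⬝ᵥ Q *ᵥ 1) ^ 2 / (1 ⬝ᵥ Q *ᵥ 1)
      ≤ y ⬝ᵥ Q *ᵥ y :=
        div_le_of_le_mul₀ (hpsd.dotProduct_mulVec_nonneg_real 1)
          (hpsd.dotProduct_mulVec_nonneg_real y) (hpsd.dotProduct_mulVec_sq_le y 1)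
    _ ≤ _ := by linarith

/-- Lower bound for the Poisson variance functional: for a symmetric PSD matrix `Q`
with nonnegative entries and positive expected degrees `d = Q 1`, and any `x`,
`2 (x²)ᵀ Q x² - (x²)ᵀ diag(Q) x² ≥ ⟨d, x²⟩² / (∑ i, d i)`. -/
theorem variance_lower_bound
    {n : ℕ} (Q : Matrix (Fin n) (Fin n) ℝ)
    (hsymm : Q.IsSymm) (hpsd : Q.PosSemidef) (hnonneg : ∀ i j, 0 ≤ Q i j)
    (d : Fin n → ℝ) (hd : ∀ i, d i = ∑ j, Q i j) (hdpos : ∀ i, 0 < d i)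
    (x : Fin n → ℝ) :
    ((fun i => (x i) ^ 2) ⬝ᵥ (d : Fin n → ℝ)) ^ 2 / (∑ i, d i) ≤
      2 * ((fun i => (x i) ^ 2) ⬝ᵥ Q *ᵥ (fun i => (x i) ^ 2)) -
        ((fun i => (x i) ^ 2) ⬝ᵥ (Matrix.diagonal fun i => Q i i) *ᵥ (fun i => (x i) ^ 2)) :=
  variance_lower_bound_general Q hpsd hnonneg d hd x
end

section
/- Let P = Σ_{k=1}^K λ_k x_k x_k^T with orthonormal x_k and λ_k > 0, and suppose x̃_t is a unit vector orthogonal to vectors ỹ_1, …, ỹ_K satisfying ‖ỹ_k - x_k‖_2 ≤ η for all k. Then x̃_t^T P x̃_t ≤ K λ_1 η². -/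
open Matrix Finset

/-- Noise eigenvector bound: with `P = ∑ λ_k x_k x_kᵀ`, if the unit vector `x̃_t` is
orthogonal to vectors `ỹ_k` that are each within `η` of `x_k`, then
`x̃_tᵀ P x̃_t ≤ K λ₁ η²`. -/
theorem noise_eigenvector_quadratic_form_bound
    {n K : ℕ} (hK : 0 < K)
    (x : Fin K → Fin n → ℝ)
    (hortho : ∀ k l : Fin K, (∑ i, x k i * x l i) = if k = l then 1 else 0)
    (lam : Fin K → ℝ) (hpos : ∀ k, 0 < lam k)
    (hmono : ∀ k l : Fin K, k ≤ l → lam l ≤ lam k)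
    (P : Matrix (Fin n) (Fin n) ℝ)
    (hP : P = ∑ k, lam k • Matrix.vecMulVec (x k) (x k))
    (xt : Fin n → ℝ) (hxt : ∑ i, (xt i) ^ 2 = 1)
    (y : Fin K → Fin n → ℝ)
    (hperp : ∀ k, (∑ i, xt i * y k i) = 0)
    (η : ℝ) (hη : ∀ k, Real.sqrt (∑ i, (y k i - x k i) ^ 2) ≤ η) :
    xt ⬝ᵥ P *ᵥ xt ≤ K * lam ⟨0, hK⟩ * η ^ 2 := by
  have key : xt ⬝ᵥ P *ᵥ xt = ∑ k, lam k * (∑ i, xt i * x k i) ^ 2 := by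
    subst hP
    simp only [dotProduct, Matrix.mulVec, dotProduct, Matrix.sum_apply,
      Matrix.smul_apply, Matrix.vecMulVec_apply, smul_eq_mul, sq,
      Finset.sum_mul, Finset.mul_sum]
    calc (∑ i : Fin n, ∑ j : Fin n, ∑ k : Fin K, xt i * (lam k * (x k i * x k j) * xt j))
        = ∑ i : Fin n, ∑ k : Fin K, ∑ j : Fin n, xt i * (lam k * (x k i * x k j) * xt j) :=
          Finset.sum_congr rfl fun i _ => Finset.sum_comm
      _ = ∑ k : Fin K, ∑ i : Fin n, ∑ j : Fin n, xt i * (lam k * (x k i * x k j) * xt j) :=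
          Finset.sum_comm
      _ = ∑ k : Fin K, ∑ j : Fin n, ∑ i : Fin n, lam k * (xt i * x k i * (xt j * x k j)) := by
          refine Finset.sum_congr rfl fun k _ => ?_
          rw [Finset.sum_comm]
          exact Finset.sum_congr rfl fun j _ => Finset.sum_congr rfl fun i _ => by ring
  rw [key]
  have hη0 : 0 ≤ η := le_trans (Real.sqrt_nonneg _) (hη ⟨0, hK⟩)
  have hbd : ∀ k : Fin K, lam k * (∑ i, xt i * x k i) ^ 2 ≤ lam ⟨0, hK⟩ * η ^ 2 := by
    intro k
    have h1 : (∑ i, xt i * x k i) = ∑ i, xt i * (x k i - y k i) := by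
      rw [← sub_eq_zero]
      rw [← Finset.sum_sub_distrib]
      have := hperp k
      rw [← this]
      congr 1; ext i; ring
    have h2 : (∑ i, xt i * x k i) ^ 2 ≤ η ^ 2 := by
      rw [h1]
      calc (∑ i, xt i * (x k i - y k i)) ^ 2
          ≤ (∑ i, xt i ^ 2) * ∑ i, (x k i - y k i) ^ 2 :=
            Finset.sum_mul_sq_le_sq_mul_sq _ _ _
        _ = ∑ i, (y k i - x k i) ^ 2 := by
            rw [hxt, one_mul]; exact Finset.sum_congr rfl fun i _ => by ring
        _ ≤ η ^ 2 := by
            have := hη k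
            have hnn : (0:ℝ) ≤ ∑ i, (y k i - x k i) ^ 2 :=
              Finset.sum_nonneg fun i _ => sq_nonneg _
            nlinarith [Real.sq_sqrt hnn, Real.sqrt_nonneg (∑ i, (y k i - x k i) ^ 2)]
    calc lam k * (∑ i, xt i * x k i) ^ 2
        ≤ lam k * η ^ 2 := by
          exact mul_le_mul_of_nonneg_left h2 (hpos k).le
      _ ≤ lam ⟨0, hK⟩ * η ^ 2 := by
          exact mul_le_mul_of_nonneg_right (hmono ⟨0, hK⟩ k (Fin.mk_le_of_le_val (Nat.zero_le _))) (sq_nonneg _)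
  calc ∑ k, lam k * (∑ i, xt i * x k i) ^ 2
      ≤ ∑ _k : Fin K, lam ⟨0, hK⟩ * η ^ 2 := Finset.sum_le_sum fun k _ => hbd k
    _ = K * lam ⟨0, hK⟩ * η ^ 2 := by
        rw [Finset.sum_const, Finset.card_univ, Fintype.card_fin]; ring
end
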